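/- arXiv:2203.02827 — 2 statements merged into one kernel-verified Lean document; each statement's English description precedes it below -/
import Mathlib

section
/- A square real matrix A is Schur stable (all eigenvalues have modulus strictly less than 1) if and only if there exists a symmetric positive definite matrix W such that the block matrix [[W, A·W],[W·Aᵀ, W]] is positive definite. -/
/-!
With `W` positive definite, the block matrix is positive definite iff its Schur complement
`W - A W Aᵀ` is. If `W - A W Aᴴ` is positive definite and `w` is a left eigenvector of `A` for
`μ`, evaluating both quadratic forms at `star w` gives `(1 - |μ|²) q > 0` with `q > 0`, so
`|μ| < 1`. Conversely, if every eigenvalue lies in the open unit disc, Gelfand's formula makes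
`‖Aᵏ‖` decay geometrically, so `W = ∑ Aᵏ (Aᵀ)ᵏ` converges; it satisfies `W = 1 + A W Aᵀ`,
hence is positive definite with Schur complement `1`.
-/

open Matrix Filter
open scoped NNReal ComplexOrder

namespace spectrum

variable {𝔸 : Type*} [NormedRing 𝔸] [NormedAlgebra ℂ 𝔸] [CompleteSpace 𝔸]

theorem spectralRadius_lt_one_of_forall_norm_lt_one {a : 𝔸} (h : ∀ μ ∈ spectrum ℂ a, ‖μ‖ < 1) :
    spectralRadius ℂ a < 1 := by
  rcases subsingleton_or_nontrivial 𝔸 with _ | _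
  · simp [spectralRadius, of_subsingleton]
  · simpa using spectralRadius_lt_of_forall_lt a (r := 1) fun μ hμ => by exact_mod_cast h μ hμ

theorem eventually_norm_pow_le_of_spectralRadius_lt (a : 𝔸) {r : ℝ≥0}
    (h : spectralRadius ℂ a < r) : ∀ᶠ k : ℕ in atTop, ‖a ^ k‖ ≤ r ^ k := by
  filter_upwards [(pow_nnnorm_pow_one_div_tendsto_nhds_spectralRadius a).eventually_lt_const h,
    eventually_gt_atTop 0] with k hk hk0
  rw [one_div, ENNReal.rpow_inv_lt_iff (by positivity), ENNReal.rpow_natCast,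
    ← ENNReal.coe_pow, ENNReal.coe_lt_coe] at hk
  exact_mod_cast hk.le

end spectrum

namespace Matrix

variable {𝕜 ι : Type*} [RCLike 𝕜] [Fintype ι]

theorem PosSemidef.tsum {X : Type*} {f : X → Matrix ι ι 𝕜} (hf : ∀ k, (f k).PosSemidef)
    (hs : Summable f) : (∑' k, f k).PosSemidef := by
  refine .of_dotProduct_mulVec_nonneg ?_ fun x => ?_
  · simp only [IsHermitian, conjTranspose_tsum, fun k => (hf k).isHermitian.eq]
  · let q : Matrix ι ι 𝕜 →+ 𝕜 :=
      AddMonoidHom.mk' (fun M => star x ⬝ᵥ M *ᵥ x) fun M N => by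
        rw [add_mulVec, dotProduct_add]
    exact (hs.hasSum.map q (continuous_const.dotProduct (continuous_id.matrix_mulVec
      continuous_const))).nonneg fun k => (hf k).dotProduct_mulVec_nonneg x

variable [DecidableEq ι]

theorem posDef_iff_posSemidef_and_isUnit {M : Matrix ι ι 𝕜} :
    M.PosDef ↔ M.PosSemidef ∧ IsUnit M :=
  ⟨fun h => ⟨h.posSemidef, h.isUnit⟩, fun h => h.1.posDef_iff_isUnit.mpr h.2⟩

theorem PosDef.posDef_fromBlocks₂₂_iff {κ : Type*} [Fintype κ] [DecidableEq κ]
    (A : Matrix κ κ 𝕜) (B : Matrix κ ι 𝕜) {D : Matrix ι ι 𝕜} (hD : D.PosDef) :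
    (fromBlocks A B Bᴴ D).PosDef ↔ (A - B * D⁻¹ * Bᴴ).PosDef := by
  let := hD.isUnit.invertible
  rw [posDef_iff_posSemidef_and_isUnit, posDef_iff_posSemidef_and_isUnit, hD.fromBlocks₂₂,
    isUnit_fromBlocks_iff_of_invertible₂₂, invOf_eq_nonsing_inv]

theorem posDef_fromBlocks_mul_conjTranspose_iff {A W : Matrix ι ι 𝕜} (hW : W.PosDef) :
    (fromBlocks W (A * W) (W * Aᴴ) W).PosDef ↔ (W - A * W * Aᴴ).PosDef := by
  have hAW : (A * W)ᴴ = W * Aᴴ := by rw [conjTranspose_mul, hW.isHermitian.eq]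
  rw [← hAW, hW.posDef_fromBlocks₂₂_iff, hAW,
    mul_nonsing_inv_cancel_right _ _ (isUnit_iff_isUnit_det W |>.mp hW.isUnit), Matrix.mul_assoc]

theorem PosDef.map_ofReal {M : Matrix ι ι ℝ} (hM : M.PosDef) :
    (M.map (algebraMap ℝ 𝕜)).PosDef := by
  open scoped MatrixOrder in
  obtain ⟨B, rfl⟩ := CStarAlgebra.nonneg_iff_eq_star_mul_self.mp hM.posSemidef.nonneg
  refine posDef_iff_posSemidef_and_isUnit.mpr ⟨?_, hM.isUnit.map (algebraMap ℝ 𝕜).mapMatrix⟩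
  have hB : (star B * B).map (algebraMap ℝ 𝕜) =
      (B.map (algebraMap ℝ 𝕜))ᴴ * B.map (algebraMap ℝ 𝕜) := by
    rw [Matrix.map_mul, star_eq_conjTranspose, conjTranspose_map]
    intro r
    simp
  rw [hB]
  exact posSemidef_conjTranspose_mul_self _

theorem exists_vecMul_eq_smul_of_mem_spectrum {A : Matrix ι ι 𝕜} {μ : 𝕜}
    (hμ : μ ∈ spectrum 𝕜 A) : ∃ w ≠ 0, w ᵥ* A = μ • w := by
  rw [spectrum.mem_iff, isUnit_iff_isUnit_det, isUnit_iff_ne_zero, not_not] at hμ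
  obtain ⟨w, hw0, hw⟩ := exists_vecMul_eq_zero_iff.mpr hμ
  refine ⟨w, hw0, ?_⟩
  rwa [vecMul_sub, Algebra.algebraMap_eq_smul_one, vecMul_smul, vecMul_one, sub_eq_zero,
    eq_comm] at hw

theorem norm_lt_one_of_mem_spectrum_of_posDef {A W : Matrix ι ι 𝕜} (hW : W.PosDef)
    (hS : (W - A * W * Aᴴ).PosDef) {μ : 𝕜} (hμ : μ ∈ spectrum 𝕜 A) : ‖μ‖ < 1 := by
  obtain ⟨w, hw0, hw⟩ := exists_vecMul_eq_smul_of_mem_spectrum hμ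
  have hv0 : star w ≠ 0 := by simpa using hw0
  have hAv : Aᴴ *ᵥ star w = star μ • star w := by rw [← star_vecMul, hw, star_smul]
  set q := w ⬝ᵥ W *ᵥ star w
  have hq : 0 < q := by simpa using hW.dotProduct_mulVec_pos hv0
  have hSq : 0 < ((1 - ‖μ‖ ^ 2 : ℝ) : 𝕜) * q := by
    have := hS.dotProduct_mulVec_pos hv0
    rw [star_star, sub_mulVec, dotProduct_sub, ← mulVec_mulVec, ← mulVec_mulVec, hAv,
      dotProduct_mulVec w A, hw, mulVec_smul, smul_dotProduct, dotProduct_smul, smul_eq_mul,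
      smul_eq_mul, ← mul_assoc, RCLike.star_def, RCLike.mul_conj] at this
    simpa [sub_mul] using this
  have : 0 < 1 - ‖μ‖ ^ 2 := RCLike.ofReal_pos.mp (pos_of_mul_pos_left hSq hq.le)
  nlinarith [norm_nonneg μ]

section SteinSeries

variable {A : Matrix ι ι 𝕜} (hs : Summable fun k => A ^ k * Aᴴ ^ k)
include hs

theorem tsum_pow_mul_conjTranspose_pow_eq :
    ∑' k, A ^ k * Aᴴ ^ k = 1 + A * (∑' k, A ^ k * Aᴴ ^ k) * Aᴴ := by
  rw [← hs.tsum_mul_left, ← (hs.mul_left A).tsum_mul_right, hs.tsum_eq_zero_add]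
  simp only [pow_zero, mul_one, pow_succ' A, pow_succ Aᴴ, Matrix.mul_assoc]

theorem posDef_tsum_pow_mul_conjTranspose_pow : (∑' k, A ^ k * Aᴴ ^ k).PosDef := by
  have hterm (k : ℕ) : (A ^ k * Aᴴ ^ k).PosSemidef := by
    simpa [conjTranspose_pow] using posSemidef_self_mul_conjTranspose (A ^ k)
  rw [tsum_pow_mul_conjTranspose_pow_eq hs]
  exact PosDef.one.add_posSemidef ((PosSemidef.tsum hterm hs).mul_mul_conjTranspose_same A)

end SteinSeries

section Frobenius

-- The Frobenius norm is chosen because it is invariant under `ᴴ` and under `ℝ → ℂ`.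
attribute [local instance] frobeniusNormedRing frobeniusNormedAlgebra

theorem summable_pow_mul_conjTranspose_pow_of_forall_norm_lt_one {A : Matrix ι ι ℝ}
    (h : ∀ μ ∈ spectrum ℂ (A.map (algebraMap ℝ ℂ)), ‖μ‖ < 1) :
    Summable fun k => A ^ k * Aᴴ ^ k := by
  obtain ⟨r, hρr, hr⟩ := exists_between (spectrum.spectralRadius_lt_one_of_forall_norm_lt_one h)
  lift r to ℝ≥0 using ne_top_of_lt hr
  have hr1 : (r : ℝ) < 1 := by exact_mod_cast hr
  have hnorm (k : ℕ) : ‖A ^ k‖ = ‖A.map (algebraMap ℝ ℂ) ^ k‖ := by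
    rw [← Matrix.map_pow, frobenius_norm_map_eq]
    simp
  refine Summable.of_norm_bounded_eventually_nat
    (summable_geometric_of_lt_one (r := (r : ℝ) ^ 2) (by positivity) (by nlinarith [r.coe_nonneg]))
    ?_
  filter_upwards [spectrum.eventually_norm_pow_le_of_spectralRadius_lt _ hρr] with k hk
  calc ‖A ^ k * Aᴴ ^ k‖ ≤ ‖A ^ k‖ * ‖(A ^ k)ᴴ‖ := by rw [conjTranspose_pow]; exact norm_mul_le _ _
    _ = ‖A ^ k‖ * ‖A ^ k‖ := by rw [frobenius_norm_conjTranspose]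
    _ ≤ r ^ k * r ^ k := by rw [hnorm]; gcongr
    _ = ((r : ℝ) ^ 2) ^ k := by ring

end Frobenius

end Matrix

/-- A real square matrix is Schur stable iff there is a symmetric positive
definite W such that the block matrix [[W, AW],[WAᵀ, W]] is positive definite. -/
theorem stmt_3 {n : ℕ} (A : Matrix (Fin n) (Fin n) ℝ) :
    (∀ μ ∈ spectrum ℂ (A.map (algebraMap ℝ ℂ)), ‖μ‖ < 1) ↔
      ∃ W : Matrix (Fin n) (Fin n) ℝ, W.PosDef ∧ Wᵀ = W ∧
        (Matrix.fromBlocks W (A * W) (W * Aᵀ) W).PosDef := by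
  have hAH : Aᴴ = Aᵀ := conjTranspose_eq_transpose_of_trivial A
  constructor
  · intro h
    have hs := summable_pow_mul_conjTranspose_pow_of_forall_norm_lt_one h
    have hW := posDef_tsum_pow_mul_conjTranspose_pow hs
    refine ⟨_, hW, by simpa using hW.isHermitian.eq, ?_⟩
    rw [← hAH, posDef_fromBlocks_mul_conjTranspose_iff hW,
      sub_eq_iff_eq_add.mpr (tsum_pow_mul_conjTranspose_pow_eq hs)]
    exact PosDef.one
  · rintro ⟨W, hW, -, hblock⟩ μ hμ
    rw [← hAH, posDef_fromBlocks_mul_conjTranspose_iff hW] at hblock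
    refine norm_lt_one_of_mem_spectrum_of_posDef hW.map_ofReal ?_ hμ
    have hS := hblock.map_ofReal (𝕜 := ℂ)
    rwa [Matrix.map_sub _ (map_sub _), Matrix.map_mul, Matrix.map_mul,
      conjTranspose_map _ fun r => by simp] at hS
end

section
/- Let N₁ ∈ ℝ^(n×n), N₂ ∈ ℝ^(n×p), N₃ ∈ ℝ^(q×n), and let T ∈ ℝ^(r×q) be such that T·N₃ has full row rank r. Suppose there exist W ∈ ℝ^(n×n) symmetric positive definite, N ∈ ℝ^(p×r), and M ∈ ℝ^(r×r) such that T·N₃·W = M·T·N₃ and the block matrix [[W, N₁W + N₂·N·T·N₃],[(N₁W + N₂·N·T·N₃)ᵀ, W]] is positive definite. Then M is invertible, and the matrix A := N₁ + N₂·(N·M⁻¹·T)·N₃ satisfies: [[W, AW],[WAᵀ, W]] is positive definite (hence A is Schur stable). -/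
/-!
`M * (T * N₃) = T * N₃ * W` has the full row rank of `T * N₃`, so `M` is invertible. Then
`T * N₃ = M⁻¹ * T * N₃ * W`, hence `A * W = N₁ * W + N₂ * N * T * N₃`: the two block matrices
are literally equal.
-/

open Matrix

namespace Matrix

variable {m n K : Type*} [Fintype m] [Fintype n] [DecidableEq m] [Field K]

theorem isUnit_of_rank_eq_card {A : Matrix m m K} (h : A.rank = Fintype.card m) : IsUnit A := by
  rw [← mulVec_surjective_iff_isUnit]
  refine LinearMap.range_eq_top.mp (Submodule.eq_top_of_finrank_eq (S := A.mulVecLin.range) ?_)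
  rwa [Module.finrank_fintype_fun_eq_card, ← rank]

theorem isUnit_of_mul_eq_mul_of_rank_eq_card [DecidableEq n] {B : Matrix m n K} {W : Matrix n n K}
    {M : Matrix m m K} (hB : B.rank = Fintype.card m) (hW : IsUnit W.det) (h : B * W = M * B) :
    IsUnit M := by
  refine isUnit_of_rank_eq_card (le_antisymm (rank_le_card_width M) ?_)
  calc Fintype.card m = (M * B).rank := by rw [← h, rank_mul_eq_left_of_isUnit_det W B hW, hB]
    _ ≤ M.rank := rank_mul_le_left M B

theorem inv_mul_mul_eq_of_mul_eq_mul {B : Matrix m n K} {W : Matrix n n K} {M : Matrix m m K}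
    (hM : IsUnit M) (h : B * W = M * B) : M⁻¹ * B * W = B := by
  rw [Matrix.mul_assoc, h, ← Matrix.mul_assoc, nonsing_inv_mul M ((isUnit_iff_isUnit_det M).mp hM),
    Matrix.one_mul]

end Matrix

theorem stmt_7_general {n p q r : ℕ}
    (N₁ : Matrix (Fin n) (Fin n) ℝ) (N₂ : Matrix (Fin n) (Fin p) ℝ)
    (N₃ : Matrix (Fin q) (Fin n) ℝ) (T : Matrix (Fin r) (Fin q) ℝ)
    (hrank : (T * N₃).rank = r)
    (W : Matrix (Fin n) (Fin n) ℝ) (hW : W.PosDef)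
    (N : Matrix (Fin p) (Fin r) ℝ) (M : Matrix (Fin r) (Fin r) ℝ)
    (hM : T * N₃ * W = M * (T * N₃))
    (hLMI : (Matrix.fromBlocks W (N₁ * W + N₂ * N * T * N₃)
        (N₁ * W + N₂ * N * T * N₃)ᵀ W).PosDef) :
    IsUnit M ∧
      (Matrix.fromBlocks W ((N₁ + N₂ * (N * M⁻¹ * T) * N₃) * W)
        (W * (N₁ + N₂ * (N * M⁻¹ * T) * N₃)ᵀ) W).PosDef := by
  have hMunit : IsUnit M := isUnit_of_mul_eq_mul_of_rank_eq_card
    (by rw [hrank, Fintype.card_fin]) (isUnit_iff_ne_zero.mpr hW.det_pos.ne') hM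
  have hAW : (N₁ + N₂ * (N * M⁻¹ * T) * N₃) * W = N₁ * W + N₂ * N * T * N₃ := by
    have hTN₃ := inv_mul_mul_eq_of_mul_eq_mul hMunit hM
    simp only [Matrix.add_mul, Matrix.mul_assoc] at hTN₃ ⊢
    rw [hTN₃]
  have hWAt : W * (N₁ + N₂ * (N * M⁻¹ * T) * N₃)ᵀ = (N₁ * W + N₂ * N * T * N₃)ᵀ := by
    rw [← hAW, transpose_mul, ← conjTranspose_eq_transpose_of_trivial W, hW.isHermitian.eq]
  rw [hAW, hWAt]
  exact ⟨hMunit, hLMI⟩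

/-- LMI tightening of the BMI in the op-UIE design: the LMI conditions force
M invertible and A := N₁ + N₂(N M⁻¹ T)N₃ to satisfy the Lyapunov LMI. -/
theorem stmt_7 {n p q r : ℕ}
    (N₁ : Matrix (Fin n) (Fin n) ℝ) (N₂ : Matrix (Fin n) (Fin p) ℝ)
    (N₃ : Matrix (Fin q) (Fin n) ℝ) (T : Matrix (Fin r) (Fin q) ℝ)
    (hrank : (T * N₃).rank = r)
    (W : Matrix (Fin n) (Fin n) ℝ) (hWsymm : Wᵀ = W) (hW : W.PosDef)
    (N : Matrix (Fin p) (Fin r) ℝ) (M : Matrix (Fin r) (Fin r) ℝ)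
    (hM : T * N₃ * W = M * (T * N₃))
    (hLMI : (Matrix.fromBlocks W (N₁ * W + N₂ * N * T * N₃)
        (N₁ * W + N₂ * N * T * N₃)ᵀ W).PosDef) :
    IsUnit M ∧
      (Matrix.fromBlocks W ((N₁ + N₂ * (N * M⁻¹ * T) * N₃) * W)
        (W * (N₁ + N₂ * (N * M⁻¹ * T) * N₃)ᵀ) W).PosDef :=
  stmt_7_general N₁ N₂ N₃ T hrank W hW N M hM hLMI
end
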